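/- arXiv:1008.1653 — 3 statements merged into one kernel-verified Lean document; each statement's English description precedes it below -/
import Mathlib

section
/- Every integer m with 1 ≤ m < 2^k (for k ≥ 2) can be written either as a sum (2^{k_1}-1) + (2^{k_2}-1) + ⋯ + (2^{k_ℓ}-1), or as (2^{k_1}-1) + ⋯ + (2^{k_{ℓ-1}}-1) + 2·(2^{k_ℓ}-1), where 1 ≤ ℓ ≤ k-1 and k ≥ k_1 > k_2 > ⋯ > k_ℓ ≥ 1. -/
/-!
With `mersenne j = 2^j - 1` we have `mersenne (n+1) = 2 * mersenne n + 1`. By induction on `n`,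
every `m` with `1 ≤ m ≤ 2 * mersenne n` is a sum of distinct `mersenne j` with `1 ≤ j ≤ n`, the
smallest possibly doubled: a larger `m ≤ 2 * mersenne (n+1)` is either `mersenne (n+1)`, or its
double, or `mersenne (n+1) + r` with `1 ≤ r ≤ 2 * mersenne n`. For `k ≥ 2` this covers every
`m < 2^k` except `mersenne k` itself, which is a single term. The number of terms is at most the
largest exponent, since the exponents strictly decrease and stay positive.
-/

open Matrix

def MersenneDecomposable (n m : ℕ) : Prop :=
  ∃ ℓ' : ℕ, ∃ ks : Fin (ℓ' + 1) → ℕ, StrictAnti ks ∧ ks 0 ≤ n ∧ 1 ≤ ks (Fin.last ℓ') ∧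
    (m = ∑ i, mersenne (ks i) ∨ m = ∑ i, mersenne (ks i) + mersenne (ks (Fin.last ℓ')))

lemma StrictAnti.val_add_le_apply_zero {ℓ : ℕ} {f : Fin (ℓ + 1) → ℕ} (hf : StrictAnti f)
    (i : Fin (ℓ + 1)) : (i : ℕ) + f i ≤ f 0 := by
  induction i using Fin.induction with
  | zero => simp
  | succ i ih =>
    have := hf (Fin.castSucc_lt_succ (i := i))
    simp only [Fin.val_succ, Fin.val_castSucc] at ih ⊢
    omega

namespace MersenneDecomposable

lemma mono {n n' m : ℕ} (h : MersenneDecomposable n m) (hn : n ≤ n') :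
    MersenneDecomposable n' m :=
  let ⟨ℓ', ks, hanti, hk0, hlast, hm⟩ := h
  ⟨ℓ', ks, hanti, hk0.trans hn, hlast, hm⟩

lemma mersenne_self {n : ℕ} (hn : 1 ≤ n) : MersenneDecomposable n (mersenne n) :=
  ⟨0, ![n], strictAnti_vecEmpty, le_rfl, hn, Or.inl (by simp)⟩

lemma two_mul_mersenne_self {n : ℕ} (hn : 1 ≤ n) :
    MersenneDecomposable n (2 * mersenne n) :=
  ⟨0, ![n], strictAnti_vecEmpty, le_rfl, hn, Or.inr (by simp [two_mul])⟩

lemma mersenne_succ_add {n r : ℕ} (h : MersenneDecomposable n r) :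
    MersenneDecomposable (n + 1) (mersenne (n + 1) + r) := by
  obtain ⟨ℓ', ks, hanti, hk0, hlast, hr⟩ := h
  have hsum :
      ∑ i, mersenne (vecCons (n + 1) ks i) = mersenne (n + 1) + ∑ i, mersenne (ks i) := by
    simp [Fin.sum_univ_succ]
  have hcons_last : vecCons (n + 1) ks (Fin.last (ℓ' + 1)) = ks (Fin.last ℓ') :=
    cons_val_succ _ _ (Fin.last ℓ')
  refine ⟨ℓ' + 1, vecCons (n + 1) ks, strictAnti_vecCons.2 ⟨by omega, hanti⟩, by simp,
    hcons_last ▸ hlast, ?_⟩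
  rw [hsum, hcons_last]
  omega

end MersenneDecomposable

theorem mersenneDecomposable_of_le_two_mul_mersenne {n m : ℕ} (hm1 : 1 ≤ m)
    (hm2 : m ≤ 2 * mersenne n) : MersenneDecomposable n m := by
  induction n generalizing m with
  | zero => rw [mersenne_zero] at hm2; omega
  | succ n ih =>
    have hsucc := mersenne_succ n
    rcases le_or_gt m (2 * mersenne n) with hlow | hhigh
    · exact (ih hm1 hlow).mono n.le_succ
    obtain rfl | hne := eq_or_ne m (mersenne (n + 1))
    · exact .mersenne_self n.succ_pos
    obtain rfl | hne' := eq_or_ne m (2 * mersenne (n + 1))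
    · exact .two_mul_mersenne_self n.succ_pos
    have hr := ih (m := m - mersenne (n + 1)) (by omega) (by omega)
    simpa [Nat.add_sub_cancel' (show mersenne (n + 1) ≤ m by omega)] using hr.mersenne_succ_add

/-- Every `m` with `1 ≤ m < 2^k` (for `k ≥ 2`) is a sum of terms `2^{k_i} - 1` with
`k ≥ k_1 > k_2 > ⋯ > k_ℓ ≥ 1`, where the last term is possibly doubled, and the
number of terms `ℓ` satisfies `1 ≤ ℓ ≤ k - 1`. Here the number of terms is `ℓ' + 1`. -/
theorem m_decomposition (k m : ℕ) (hk : 2 ≤ k) (hm1 : 1 ≤ m) (hm2 : m < 2 ^ k) :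
    ∃ ℓ' : ℕ, ∃ ks : Fin (ℓ' + 1) → ℕ,
      ℓ' + 1 ≤ k - 1 ∧ StrictAnti ks ∧ ks 0 ≤ k ∧ 1 ≤ ks (Fin.last ℓ') ∧
      (m = ∑ i, (2 ^ ks i - 1) ∨
        m = (∑ i, (2 ^ ks i - 1)) + (2 ^ ks (Fin.last ℓ') - 1)) := by
  obtain ⟨j, rfl⟩ : ∃ j, k = j + 1 := ⟨k - 1, by omega⟩
  have hsucc := mersenne_succ j
  have htop := succ_mersenne (j + 1)
  obtain rfl | hne := eq_or_ne m (mersenne (j + 1))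
  · exact ⟨0, ![j + 1], by omega, strictAnti_vecEmpty, le_rfl, by simp,
      Or.inl (by simp [mersenne])⟩
  obtain ⟨ℓ', ks, hanti, hk0, hlast, hm⟩ :=
    mersenneDecomposable_of_le_two_mul_mersenne (n := j) hm1 (by omega)
  have hℓ := hanti.val_add_le_apply_zero (Fin.last ℓ')
  rw [Fin.val_last] at hℓ
  exact ⟨ℓ', ks, by omega, hanti, by omega, hlast, hm⟩
end

section
/- Let L ⊆ Σ* be a nonempty prefix-free regular language with L ≠ {λ}, accepted by a minimal NFA with n states. Then any DFA accepting L has at least n+1 states. -/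
/-!
A DFA for `L` becomes an NFA for `L` once its dead states (those from which no word is
accepted) are deleted, and this NFA still has a single initial state whenever `L ≠ 0`.
If `L` is prefix-free and contains a word `w ≠ []`, the state reached on `w ++ w` is dead, so the
DFA has strictly more states than this NFA, hence than a minimal NFA for `L`.
-/

namespace Language

variable {α : Type*}

def IsPrefixFree (L : Language α) : Prop :=
  ∀ y ∈ L, ∀ z : List α, z ≠ [] → y ++ z ∉ L

theorem IsPrefixFree.eq_one_of_nil_mem {L : Language α} (hL : L.IsPrefixFree) (hnil : [] ∈ L) :
    L = 1 := by
  ext x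
  rw [mem_one]
  refine ⟨fun hx => ?_, fun hx => hx ▸ hnil⟩
  by_contra hx_ne
  exact hL [] hnil x hx_ne hx

theorem IsPrefixFree.exists_ne_nil_mem {L : Language α} (hL : L.IsPrefixFree) (hne : L ≠ 0)
    (hnlam : L ≠ 1) : ∃ w ∈ L, w ≠ [] := by
  obtain ⟨w, hw⟩ := Set.nonempty_iff_ne_empty.mpr hne
  exact ⟨w, hw, fun hw_nil => hnlam (hL.eq_one_of_nil_mem (hw_nil ▸ hw))⟩

end Language

namespace DFA

variable {α σ : Type*} (M : DFA α σ)

def IsLive (s : σ) : Prop :=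
  ∃ x, M.evalFrom s x ∈ M.accept

variable {M}

theorem IsLive.of_evalFrom {s : σ} {x : List α} (h : M.IsLive (M.evalFrom s x)) : M.IsLive s := by
  obtain ⟨y, hy⟩ := h
  exact ⟨x ++ y, by rwa [evalFrom_of_append]⟩

theorem isLive_start_of_mem_accepts {x : List α} (hx : x ∈ M.accepts) : M.IsLive M.start :=
  ⟨x, hx⟩

theorem not_isLive_eval_append (hpf : M.accepts.IsPrefixFree) {w z : List α}
    (hw : w ∈ M.accepts) (hz : z ≠ []) : ¬ M.IsLive (M.eval (w ++ z)) := by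
  rintro ⟨y, hy⟩
  refine hpf w hw (z ++ y) (by simp [hz]) ?_
  rwa [← List.append_assoc, mem_accepts, eval, evalFrom_of_append]

variable (M)

def toLiveNFA : NFA α {s // M.IsLive s} where
  step s a := {t | t.1 = M.step s.1 a}
  start := {t | t.1 = M.start}
  accept := {t | t.1 ∈ M.accept}

theorem toLiveNFA_start_eq (h : M.IsLive M.start) : M.toLiveNFA.start = {⟨M.start, h⟩} :=
  Set.ext fun t => (Subtype.ext_iff (a1 := t) (a2 := ⟨M.start, h⟩)).symm

theorem mem_toLiveNFA_evalFrom_iff (T : Set {s // M.IsLive s}) (x : List α)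
    (s : {s // M.IsLive s}) :
    s ∈ M.toLiveNFA.evalFrom T x ↔ ∃ t ∈ T, M.evalFrom t.1 x = s.1 := by
  induction x generalizing T with
  | nil =>
    simp only [NFA.evalFrom_nil, evalFrom_nil]
    exact ⟨fun hs => ⟨s, hs, rfl⟩, fun ⟨t, ht, hts⟩ => Subtype.ext hts ▸ ht⟩
  | cons a x ih =>
    simp only [NFA.evalFrom_cons, ih, NFA.mem_stepSet, evalFrom_cons]
    constructor
    · rintro ⟨u, ⟨t, ht, hut⟩, hus⟩
      exact ⟨t, ht, (congrArg (M.evalFrom · x) hut).symm.trans hus⟩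
    · rintro ⟨t, ht, hts⟩
      -- the successor `M.step t a` is live because `s` is reached from it
      have hlive : M.IsLive (M.step t.1 a) := IsLive.of_evalFrom (hts ▸ s.2)
      exact ⟨⟨_, hlive⟩, ⟨t, ht, rfl⟩, hts⟩

theorem toLiveNFA_accepts : M.toLiveNFA.accepts = M.accepts := by
  ext x
  simp only [NFA.mem_accepts, mem_toLiveNFA_evalFrom_iff]
  constructor
  · rintro ⟨s, hs, t, ht, hts⟩
    change t.1 = M.start at ht
    rw [mem_accepts, eval, ← ht, hts]
    exact hs
  · intro hx
    exact ⟨⟨M.eval x, [], hx⟩, hx, ⟨M.start, x, hx⟩, rfl, rfl⟩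

end DFA

theorem prefixFree_dfa_lower_bound_general {Γ : Type} {σ : Type} [Fintype σ]
    (M : NFA Γ σ)
    (hne : M.accepts ≠ 0) (hnlam : M.accepts ≠ 1)
    (hpf : ∀ y ∈ M.accepts, ∀ z : List Γ, z ≠ [] → y ++ z ∉ M.accepts)
    (hmin : ∀ (σ' : Type) [Fintype σ'] (N : NFA Γ σ') (p0 : σ'),
      N.start = {p0} → N.accepts = M.accepts → Fintype.card σ ≤ Fintype.card σ')
    {τ : Type} [Fintype τ] (D : DFA Γ τ) (hD : D.accepts = M.accepts) :
    Fintype.card σ + 1 ≤ Fintype.card τ := by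
  classical
  rw [← hD] at hne hnlam hpf hmin
  obtain ⟨w, hw, hw_ne⟩ := Language.IsPrefixFree.exists_ne_nil_mem hpf hne hnlam
  have hstart : D.IsLive D.start := DFA.isLive_start_of_mem_accepts hw
  have hmin_live : Fintype.card σ ≤ Fintype.card {s // D.IsLive s} :=
    hmin _ D.toLiveNFA _ (D.toLiveNFA_start_eq hstart) D.toLiveNFA_accepts
  have hdead : Fintype.card {s // D.IsLive s} < Fintype.card τ :=
    Fintype.card_subtype_lt (DFA.not_isLive_eval_append hpf hw hw_ne)
  omega

/-- A nonempty prefix-free regular language `L ≠ {λ}` accepted by a minimal `n`-state NFA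
(with a single initial state) requires at least `n + 1` states in any DFA. -/
theorem prefixFree_dfa_lower_bound {Γ : Type} {σ : Type} [Fintype σ]
    (M : NFA Γ σ) (q0 : σ) (hstart : M.start = {q0})
    (hne : M.accepts ≠ 0) (hnlam : M.accepts ≠ 1)
    (hpf : ∀ y ∈ M.accepts, ∀ z : List Γ, z ≠ [] → y ++ z ∉ M.accepts)
    (hmin : ∀ (σ' : Type) [Fintype σ'] (N : NFA Γ σ') (p0 : σ'),
      N.start = {p0} → N.accepts = M.accepts → Fintype.card σ ≤ Fintype.card σ')
    {τ : Type} [Fintype τ] (D : DFA Γ τ) (hD : D.accepts = M.accepts) :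
    Fintype.card σ + 1 ≤ Fintype.card τ :=
  prefixFree_dfa_lower_bound_general M hne hnlam hpf hmin D hD
end

section
/- Every nonempty prefix-closed regular language is accepted by some NFA in which all states are accepting. -/
/-!
Run a DFA for `L` but let the run die as soon as it leaves the accepting states. All surviving
states are accepting, and a word survives exactly when each of its prefixes is accepted, which
for a prefix-closed `L` means exactly when the word lies in `L`. Nonemptiness puts `[]` in `L`,
so the start state survives.
-/

theorem List.forall_prefix_cons_iff {α : Type*} {P : List α → Prop} {a : α} {w : List α} :
    (∀ p, p <+: a :: w → P p) ↔ P [] ∧ ∀ p, p <+: w → P (a :: p) := by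
  simp only [List.prefix_cons_iff]
  constructor
  · intro h
    exact ⟨h [] (.inl rfl), fun p hp => h (a :: p) (.inr ⟨p, rfl, hp⟩)⟩
  · rintro ⟨hnil, hcons⟩ p (rfl | ⟨t, rfl, ht⟩)
    exacts [hnil, hcons t ht]

theorem NFA.evalFrom_empty {α σ : Type*} (M : NFA α σ) (w : List α) : M.evalFrom ∅ w = ∅ := by
  rw [NFA.evalFrom_eq_biUnion_singleton]; simp

namespace DFA

variable {α σ : Type*} (M : DFA α σ)

def restrictToAccept : NFA α σ where
  step q a := {M.step q a} ∩ M.accept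
  start := {M.start}
  accept := Set.univ

theorem restrictToAccept_accept : M.restrictToAccept.accept = Set.univ := rfl

theorem mem_restrictToAccept_acceptsFrom_iff {q : σ} (hq : q ∈ M.accept) {w : List α} :
    w ∈ M.restrictToAccept.acceptsFrom {q} ↔ ∀ p, p <+: w → p ∈ M.acceptsFrom q := by
  induction w generalizing q with
  | nil => simpa [restrictToAccept_accept, DFA.mem_acceptsFrom] using hq
  | cons a w ih =>
    rw [NFA.cons_mem_acceptsFrom, NFA.stepSet_singleton, List.forall_prefix_cons_iff]
    by_cases hstep : M.step q a ∈ M.accept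
    · have hstep' : M.restrictToAccept.step q a = {M.step q a} :=
        Set.inter_eq_left.mpr (Set.singleton_subset_iff.mpr hstep)
      rw [hstep', ih hstep]
      simp [DFA.mem_acceptsFrom, DFA.evalFrom_cons, hq]
    · have hstep' : M.restrictToAccept.step q a = ∅ := by
        simpa [restrictToAccept, Set.singleton_inter_eq_empty] using hstep
      simpa [hstep', NFA.mem_acceptsFrom, NFA.evalFrom_empty, DFA.mem_acceptsFrom] using
        fun _ => ⟨[], List.nil_prefix, hstep⟩

end DFA

/-- Every nonempty prefix-closed regular language is accepted by some NFA in which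
all states are accepting. -/
theorem prefixClosed_allAccepting {Γ : Type} (L : Language Γ) (hne : L ≠ 0)
    (hreg : L.IsRegular)
    (hpc : ∀ x y : List Γ, x ++ y ∈ L → x ∈ L) :
    ∃ (σ : Type) (_ : Fintype σ) (M : NFA Γ σ) (q0 : σ),
      M.start = {q0} ∧ M.accept = Set.univ ∧ M.accepts = L := by
  obtain ⟨σ, _, M, rfl⟩ := hreg
  obtain ⟨w₀, hw₀⟩ : M.accepts.Nonempty := Set.nonempty_iff_ne_empty.mpr hne
  have hstart : M.start ∈ M.accept := hpc [] w₀ hw₀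
  refine ⟨σ, inferInstance, M.restrictToAccept, M.start, rfl, rfl, ?_⟩
  ext w
  rw [NFA.accepts_eq_acceptsFrom_start]
  refine (M.mem_restrictToAccept_acceptsFrom_iff hstart).trans ⟨fun h => h w List.prefix_rfl, ?_⟩
  rintro hw p ⟨t, rfl⟩
  exact hpc p t hw
end
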